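/- arXiv:2111.09458 — 2 statements merged into one kernel-verified Lean document; each statement's English description precedes it below -/
import Mathlib

section
/- (Proposition 3.3, negative covariance) Fix λ_3 > 0 and c_1, c_2 > 0 with 5·c_1·c_2 ≥ 4·(c_1 + c_2 + 1), and set λ_1 := c_1·λ_3, λ_2 := c_2·λ_3 and δ := 1. Then in the constant-intensity Gumbel model, the covariance of the two stopping times is strictly negative: Cov(τ_1, τ_2) = E[τ_1·τ_2] − E[τ_1]·E[τ_2] < 0. -/
open MeasureTheory ProbabilityTheory Set Real Filter

section AuxCalc

lemma expDeriv' {k : ℝ} (hk : 0 < k) (x : ℝ) :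
    HasDerivAt (fun t : ℝ => -Real.exp (-(k*t))/k) (Real.exp (-(k*x))) x := by
  have h1 : HasDerivAt (fun t : ℝ => -(k*t)) (-k) x := by
    simpa using ((hasDerivAt_id x).const_mul (-k))
  have h2 := (h1.exp).neg.div_const k
  refine h2.congr_deriv ?_
  field_simp

lemma expTendsto' {k : ℝ} (hk : 0 < k) :
    Tendsto (fun t : ℝ => -Real.exp (-(k*t))/k) atTop (nhds 0) := by
  have h1 : Tendsto (fun t : ℝ => -(k*t)) atTop atBot := by
    apply Tendsto.comp tendsto_neg_atTop_atBot
    exact Tendsto.const_mul_atTop hk tendsto_id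
  have := (Real.tendsto_exp_atBot).comp h1
  have h2 := (this.neg).div_const k
  simpa using h2

lemma tail0_int {k : ℝ} (hk : 0 < k) (w : ℝ) :
    IntegrableOn (fun t => Real.exp (-(k*t))) (Set.Ioi w) := by
  simpa [neg_mul] using exp_neg_integrableOn_Ioi w hk

lemma tail0 {k : ℝ} (hk : 0 < k) (w : ℝ) :
    ∫ t in Set.Ioi w, Real.exp (-(k*t)) = Real.exp (-(k*w)) / k := by
  have := integral_Ioi_of_hasDerivAt_of_tendsto' (f := fun t : ℝ => -Real.exp (-(k*t))/k)
    (fun x _ => expDeriv' hk x) (tail0_int hk w) (expTendsto' hk)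
  rw [this]; ring

lemma expDeriv1 {k : ℝ} (hk : 0 < k) (x : ℝ) :
    HasDerivAt (fun t : ℝ => -((t/k + 1/k^2) * Real.exp (-(k*t)))) (x * Real.exp (-(k*x))) x := by
  have h1 : HasDerivAt (fun t : ℝ => -(k*t)) (-k) x := by
    simpa using ((hasDerivAt_id x).const_mul (-k))
  have h2 : HasDerivAt (fun t : ℝ => t/k + 1/k^2) (1/k) x := by
    simpa using (((hasDerivAt_id x).div_const k).add_const ((k^2)⁻¹ : ℝ))
  have h3 := ((h2.mul h1.exp).neg)
  refine h3.congr_deriv ?_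
  have : Real.exp (-(k*x)) ≠ 0 := (Real.exp_pos _).ne'
  field_simp
  ring

lemma expTendsto1 {k : ℝ} (hk : 0 < k) :
    Tendsto (fun t : ℝ => -((t/k + 1/k^2) * Real.exp (-(k*t)))) atTop (nhds 0) := by
  have base : Tendsto (fun u : ℝ => -((u * Real.exp (-u) + Real.exp (-u))/k^2)) atTop (nhds 0) := by
    have h1 : Tendsto (fun u : ℝ => u * Real.exp (-u)) atTop (nhds 0) := by
      simpa using tendsto_pow_mul_exp_neg_atTop_nhds_zero 1
    have h2 : Tendsto (fun u : ℝ => Real.exp (-u)) atTop (nhds 0) := by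
      simpa using tendsto_pow_mul_exp_neg_atTop_nhds_zero 0
    simpa using ((h1.add h2).div_const (k^2)).neg
  have hcomp : Tendsto (fun t : ℝ => k * t) atTop atTop :=
    Tendsto.const_mul_atTop hk tendsto_id
  have := base.comp hcomp
  apply this.congr
  intro t
  simp only [Function.comp]
  have : Real.exp (-(k*t)) ≠ 0 := (Real.exp_pos _).ne'
  field_simp

lemma tail1_int {k : ℝ} (hk : 0 < k) {w : ℝ} (hw : 0 ≤ w) :
    IntegrableOn (fun t => t * Real.exp (-(k*t))) (Set.Ioi w) := by
  apply integrableOn_Ioi_deriv_of_nonneg' (g := fun t : ℝ => -((t/k + 1/k^2) * Real.exp (-(k*t))))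
    (fun x _ => expDeriv1 hk x)
    (fun x hx => mul_nonneg (le_of_lt (lt_of_le_of_lt hw hx)) (Real.exp_pos _).le)
    (expTendsto1 hk)

lemma tail1 {k : ℝ} (hk : 0 < k) {w : ℝ} (hw : 0 ≤ w) :
    ∫ t in Set.Ioi w, t * Real.exp (-(k*t)) = Real.exp (-(k*w)) * (w/k + 1/k^2) := by
  have := integral_Ioi_of_hasDerivAt_of_tendsto'
    (f := fun t : ℝ => -((t/k + 1/k^2) * Real.exp (-(k*t))))
    (fun x _ => expDeriv1 hk x) (tail1_int hk hw) (expTendsto1 hk)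
  rw [this]; ring

lemma key_inv {u : ℝ} (hu : 0 ≤ u) : (1+u)⁻¹ ≤ (1 + Real.exp (-(2*u)))/2 := by
  have hd : ∀ x : ℝ, HasDerivAt (fun v : ℝ => (1+v)*(1+Real.exp (-(2*v))))
      (1 + Real.exp (-(2*x)) - (1+x)*(2*Real.exp (-(2*x)))) x := by
    intro x
    have h1 : HasDerivAt (fun v : ℝ => -(2*v)) (-2) x := by
      simpa using ((hasDerivAt_id x).const_mul (-2))
    have h2 : HasDerivAt (fun v : ℝ => 1+v) 1 x := by
      simpa using (hasDerivAt_id x).const_add 1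
    have := h2.mul ((h1.exp).const_add 1)
    refine this.congr_deriv ?_
    ring
  have mono : Monotone (fun v : ℝ => (1+v)*(1+Real.exp (-(2*v)))) := by
    apply monotone_of_deriv_nonneg
    · exact fun x => (hd x).differentiableAt
    · intro x
      rw [(hd x).deriv]
      nlinarith [Real.add_one_le_exp (2*x), Real.exp_pos (2*x), Real.exp_pos (-(2*x)),
        Real.exp_neg (2*x), mul_pos (Real.exp_pos (2*x)) (Real.exp_pos (-(2*x))),
        (by rw [← Real.exp_add]; simp : Real.exp (2*x) * Real.exp (-(2*x)) = 1)]
  have h0 := mono hu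
  simp only [mul_zero, neg_zero, Real.exp_zero] at h0
  have hx : (0:ℝ) < 1 + u := by linarith
  rw [inv_le_iff_one_le_mul₀ hx]
  nlinarith [h0, Real.exp_pos (-(2*u))]

lemma exp_sub_one_le' {x : ℝ} (hx : 0 ≤ x) : Real.exp x - 1 ≤ x * Real.exp x := by
  have h := Real.add_one_le_exp (-x)
  have key : Real.exp x * Real.exp (-x) = 1 := by rw [← Real.exp_add]; simp
  nlinarith [mul_le_mul_of_nonneg_left h (Real.exp_pos x).le]

lemma exp_mul_one_sub_le' (M : ℝ) : Real.exp M * (1 - M) ≤ 1 := by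
  have h := Real.add_one_le_exp (-M)
  have key : Real.exp M * Real.exp (-M) = 1 := by rw [← Real.exp_add]; simp
  nlinarith [mul_le_mul_of_nonneg_left h (Real.exp_pos M).le]

lemma Ioc_val {B : ℝ} (hB : 0 < B) {s : ℝ} (hs : 0 < s) :
    ∫ t in Set.Ioc 0 s, t * Real.exp (-(B*t))
      = 1/B^2 - Real.exp (-(B*s)) * (s/B + 1/B^2) := by
  have hunion : Set.Ioc 0 s ∪ Set.Ioi s = Set.Ioi (0:ℝ) := Ioc_union_Ioi_eq_Ioi hs.le
  have hdisj : Disjoint (Set.Ioc 0 s) (Set.Ioi s) := Ioc_disjoint_Ioi le_rfl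
  have hIoc : IntegrableOn (fun t => t * Real.exp (-(B*t))) (Set.Ioc 0 s) :=
    (tail1_int hB le_rfl).mono_set Set.Ioc_subset_Ioi_self
  have hsplit := setIntegral_union hdisj measurableSet_Ioi hIoc (tail1_int hB hs.le)
    (f := fun t => t * Real.exp (-(B*t)))
  rw [hunion] at hsplit
  have h0 := tail1 hB (le_refl (0:ℝ))
  have hs' := tail1 hB hs.le
  rw [hs', h0] at hsplit
  simp only [mul_zero, neg_zero, Real.exp_zero, zero_div, one_mul, zero_add] at hsplit
  linarith

lemma Mmin_int {B : ℝ} (hB : 0 < B) {s : ℝ} (hs : 0 < s) :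
    IntegrableOn (fun t => min s t * Real.exp (-(B*t))) (Set.Ioi 0) := by
  have hunion : Set.Ioc 0 s ∪ Set.Ioi s = Set.Ioi (0:ℝ) := Ioc_union_Ioi_eq_Ioi hs.le
  rw [← hunion]
  apply MeasureTheory.IntegrableOn.union
  · apply ((tail1_int hB le_rfl).mono_set Set.Ioc_subset_Ioi_self).congr_fun
      (fun t ht => ?_) measurableSet_Ioc
    rw [min_eq_right ht.2]
  · have hbase : IntegrableOn (fun t => s * Real.exp (-(B*t))) (Set.Ioi s) :=
      (tail0_int hB s).const_mul s
    exact hbase.congr_fun (fun t ht => by rw [min_eq_left (le_of_lt ht)]) measurableSet_Ioi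

lemma Mmin {B : ℝ} (hB : 0 < B) {s : ℝ} (hs : 0 < s) :
    ∫ t in Set.Ioi 0, min s t * Real.exp (-(B*t)) = (1 - Real.exp (-(B*s)))/B^2 := by
  have hunion : Set.Ioc 0 s ∪ Set.Ioi s = Set.Ioi (0:ℝ) := Ioc_union_Ioi_eq_Ioi hs.le
  have hdisj : Disjoint (Set.Ioc 0 s) (Set.Ioi s) := Ioc_disjoint_Ioi le_rfl
  have e1 : ∀ t ∈ Set.Ioc (0:ℝ) s, min s t * Real.exp (-(B*t)) = t * Real.exp (-(B*t)) := by
    intro t ht; rw [min_eq_right ht.2]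
  have e2 : ∀ t ∈ Set.Ioi s, min s t * Real.exp (-(B*t)) = s * Real.exp (-(B*t)) := by
    intro t ht; rw [min_eq_left (le_of_lt ht)]
  have hIoc : IntegrableOn (fun t => min s t * Real.exp (-(B*t))) (Set.Ioc 0 s) := by
    apply (((tail1_int hB le_rfl).mono_set Set.Ioc_subset_Ioi_self)).congr_fun
      (fun t ht => (e1 t ht).symm) measurableSet_Ioc
  have hIoi : IntegrableOn (fun t => min s t * Real.exp (-(B*t))) (Set.Ioi s) := by
    have hbase : IntegrableOn (fun t => s * Real.exp (-(B*t))) (Set.Ioi s) :=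
      (tail0_int hB s).const_mul s
    exact hbase.congr_fun (fun t ht => (e2 t ht).symm) measurableSet_Ioi
  have hsplit := setIntegral_union hdisj measurableSet_Ioi hIoc hIoi
    (f := fun t => min s t * Real.exp (-(B*t)))
  rw [hunion] at hsplit
  rw [hsplit, setIntegral_congr_fun measurableSet_Ioc e1,
    setIntegral_congr_fun measurableSet_Ioi e2, Ioc_val hB hs,
    integral_const_mul, tail0 hB s]
  have hB2 : B^2 ≠ 0 := by positivity
  field_simp
  ring

end AuxCalc

set_option maxHeartbeats 2000000 in
theorem stmt14
    {Ω : Type*} [MeasurableSpace Ω] (P : Measure Ω) [IsProbabilityMeasure P]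
    (l₃ c₁ c₂ : ℝ) (hl₃ : 0 < l₃) (hc₁ : 0 < c₁) (hc₂ : 0 < c₂)
    (hc : 5 * c₁ * c₂ ≥ 4 * (c₁ + c₂ + 1))
    (l₁ l₂ : ℝ) (hl₁ : l₁ = c₁ * l₃) (hl₂ : l₂ = c₂ * l₃)
    (Z : Fin 3 → Ω → ℝ) (hZmeas : ∀ i, Measurable (Z i))
    (hZ12 : ∀ s t : ℝ, 0 ≤ s → 0 ≤ t →
      P {ω | s < Z 0 ω ∧ t < Z 1 ω} = ENNReal.ofReal (Real.exp (-s - t - s * t)))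
    (hZ3 : ∀ s : ℝ, 0 ≤ s →
      P {ω | s < Z 2 ω} = ENNReal.ofReal (Real.exp (-s)))
    (hindep : IndepFun (fun ω => (Z 0 ω, Z 1 ω)) (Z 2) P)
    (η : Fin 3 → Ω → ℝ)
    (hη₁ : ∀ ω, η 0 ω = Z 0 ω / l₁)
    (hη₂ : ∀ ω, η 1 ω = Z 1 ω / l₂)
    (hη₃ : ∀ ω, η 2 ω = Z 2 ω / l₃)
    (τ₁ τ₂ : Ω → ℝ)
    (hτ₁ : ∀ ω, τ₁ ω = min (η 0 ω) (η 2 ω))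
    (hτ₂ : ∀ ω, τ₂ ω = min (η 1 ω) (η 2 ω)) :
    (∫ ω, τ₁ ω * τ₂ ω ∂P) - (∫ ω, τ₁ ω ∂P) * (∫ ω, τ₂ ω ∂P) < 0 := by
  have hl₁pos : 0 < l₁ := by rw [hl₁]; positivity
  have hl₂pos : 0 < l₂ := by rw [hl₂]; positivity
  have hcons : 5*l₁*l₂ ≥ 4*l₃*(l₁+l₂+l₃) := by
    rw [hl₁, hl₂]
    nlinarith [mul_le_mul_of_nonneg_left hc (le_of_lt (mul_pos hl₃ hl₃))]
  clear hc hl₁ hl₂ hc₁ hc₂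
  set q : ℝ := l₁ * l₂ with hq_def
  set A : ℝ := l₁ + l₃ with hA_def
  set B : ℝ := l₂ + l₃ with hB_def
  set S : ℝ := A + B with hS_def
  have hqpos : 0 < q := mul_pos hl₁pos hl₂pos
  have hApos : 0 < A := by rw [hA_def]; positivity
  have hBpos : 0 < B := by rw [hB_def]; positivity
  have hSpos : 0 < S := by rw [hS_def]; positivity
  set M : ℝ := l₃^2/(4*q) with hM_def
  set EE : ℝ := Real.exp M with hEE_def
  set A2 : ℝ := A + 2*q/B with hA2_def
  have hA2pos : 0 < A2 := by
    rw [hA2_def]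
    have : 0 < 2*q/B := div_pos (by linarith) hBpos
    linarith
  have hEEpos : 0 < EE := Real.exp_pos _
  clear_value q A B S M EE A2
  -- measurability
  have mτ₁ : Measurable τ₁ := by
    have hfun : τ₁ = fun ω => min (Z 0 ω / l₁) (Z 2 ω / l₃) := by
      funext ω; rw [hτ₁ ω, hη₁ ω, hη₃ ω]
    rw [hfun]
    exact ((hZmeas 0).div_const _).min ((hZmeas 2).div_const _)
  have mτ₂ : Measurable τ₂ := by
    have hfun : τ₂ = fun ω => min (Z 1 ω / l₂) (Z 2 ω / l₃) := by
      funext ω; rw [hτ₂ ω, hη₂ ω, hη₃ ω]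
    rw [hfun]
    exact ((hZmeas 1).div_const _).min ((hZmeas 2).div_const _)
  -- joint survival function of (τ₁, τ₂)
  have hsurv : ∀ s t : ℝ, 0 ≤ s → 0 ≤ t → P {ω | s < τ₁ ω ∧ t < τ₂ ω}
      = ENNReal.ofReal (Real.exp (-(s*l₁) - t*l₂ - (s*l₁)*(t*l₂))
          * Real.exp (-(max s t * l₃))) := by
    intro s t hs ht
    have hset : {ω | s < τ₁ ω ∧ t < τ₂ ω}
        = ((fun ω => (Z 0 ω, Z 1 ω)) ⁻¹' (Set.Ioi (s*l₁) ×ˢ Set.Ioi (t*l₂)))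
          ∩ (Z 2 ⁻¹' Set.Ioi (max s t * l₃)) := by
      ext ω
      simp only [Set.mem_setOf_eq, Set.mem_inter_iff, Set.mem_preimage, Set.mem_prod,
        Set.mem_Ioi]
      rw [hτ₁ ω, hτ₂ ω, hη₁ ω, hη₂ ω, hη₃ ω, lt_min_iff, lt_min_iff,
        lt_div_iff₀ hl₁pos, lt_div_iff₀ hl₂pos, lt_div_iff₀ hl₃, lt_div_iff₀ hl₃,
        max_mul_of_nonneg _ _ hl₃.le, max_lt_iff]
      tauto
    rw [hset, hindep.measure_inter_preimage_eq_mul _ _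
      (measurableSet_Ioi.prod measurableSet_Ioi) measurableSet_Ioi]
    have h12 : ((fun ω => (Z 0 ω, Z 1 ω)) ⁻¹' (Set.Ioi (s*l₁) ×ˢ Set.Ioi (t*l₂)))
        = {ω | s*l₁ < Z 0 ω ∧ t*l₂ < Z 1 ω} := by
      ext ω; simp [Set.mem_prod]
    have h3s : (Z 2 ⁻¹' Set.Ioi (max s t * l₃)) = {ω | max s t * l₃ < Z 2 ω} := rfl
    have hmaxnn : 0 ≤ max s t * l₃ :=
      mul_nonneg (le_trans hs (le_max_left s t)) hl₃.le
    rw [h12, h3s, hZ12 (s*l₁) (t*l₂) (by positivity) (by positivity), hZ3 _ hmaxnn,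
      ← ENNReal.ofReal_mul (Real.exp_pos _).le]
  -- sets of full measure
  have hF1 : P {ω | (0:ℝ) < τ₁ ω ∧ (0:ℝ) < τ₂ ω} = 1 := by
    have h := hsurv 0 0 le_rfl le_rfl
    simpa using h
  have hT2 : P {ω | (0:ℝ) < τ₂ ω} = 1 := by
    apply le_antisymm prob_le_one
    rw [← hF1]
    exact measure_mono (fun ω h => h.2)
  have hT1 : P {ω | (0:ℝ) < τ₁ ω} = 1 := by
    apply le_antisymm prob_le_one
    rw [← hF1]
    exact measure_mono (fun ω h => h.1)
  have hinter : ∀ (As T : Set Ω), MeasurableSet T → P T = 1 → P As = P (As ∩ T) := by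
    intro As T hTm hT
    apply le_antisymm
    · calc P As ≤ P (As ∩ T) + P (As \ T) := measure_le_inter_add_diff P As T
        _ ≤ P (As ∩ T) + P Tᶜ := by
            gcongr
            exact fun ω h => h.2
        _ = P (As ∩ T) := by
            rw [measure_compl hTm (measure_ne_top _ _), measure_univ, hT]
            simp
    · exact measure_mono Set.inter_subset_left
  -- marginal survival functions
  have hsurv1 : ∀ s : ℝ, 0 ≤ s → P {ω | s < τ₁ ω} = ENNReal.ofReal (Real.exp (-(A*s))) := by
    intro s hs
    have h1 : {ω | s < τ₁ ω} ∩ {ω | (0:ℝ) < τ₂ ω} = {ω | s < τ₁ ω ∧ 0 < τ₂ ω} := rfl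
    rw [hinter {ω | s < τ₁ ω} {ω | (0:ℝ) < τ₂ ω}
      (measurableSet_lt measurable_const mτ₂) hT2, h1, hsurv s 0 hs le_rfl]
    congr 1
    rw [max_eq_left hs, ← Real.exp_add, hA_def]
    congr 1
    ring
  have hsurv2 : ∀ t : ℝ, 0 ≤ t → P {ω | t < τ₂ ω} = ENNReal.ofReal (Real.exp (-(B*t))) := by
    intro t ht
    have h1 : {ω | t < τ₂ ω} ∩ {ω | (0:ℝ) < τ₁ ω} = {ω | 0 < τ₁ ω ∧ t < τ₂ ω} := by
      ext ω; simp only [Set.mem_inter_iff, Set.mem_setOf_eq]; tauto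
    rw [hinter {ω | t < τ₂ ω} {ω | (0:ℝ) < τ₁ ω}
      (measurableSet_lt measurable_const mτ₁) hT1, h1, hsurv 0 t le_rfl ht]
    congr 1
    rw [max_eq_right ht, ← Real.exp_add, hB_def]
    congr 1
    ring
  -- a.e. nonnegativity
  have haepos : ∀ᵐ ω ∂P, 0 < τ₁ ω ∧ 0 < τ₂ ω := by
    have hmF : MeasurableSet {ω | (0:ℝ) < τ₁ ω ∧ (0:ℝ) < τ₂ ω} := by
      have : {ω | (0:ℝ) < τ₁ ω ∧ (0:ℝ) < τ₂ ω}
          = {ω | (0:ℝ) < τ₁ ω} ∩ {ω | (0:ℝ) < τ₂ ω} := rfl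
      rw [this]
      exact (measurableSet_lt measurable_const mτ₁).inter
        (measurableSet_lt measurable_const mτ₂)
    rw [ae_iff]
    have hcompl : P ({ω | (0:ℝ) < τ₁ ω ∧ (0:ℝ) < τ₂ ω}ᶜ) = 0 := by
      rw [measure_compl hmF (measure_ne_top _ _), measure_univ, hF1]
      simp
    exact hcompl
  have hτ₁nn : 0 ≤ᵐ[P] τ₁ := haepos.mono fun ω h => h.1.le
  have hτ₂nn : 0 ≤ᵐ[P] τ₂ := haepos.mono fun ω h => h.2.le
  have hprod_nn : 0 ≤ᵐ[P] fun ω => τ₁ ω * τ₂ ω :=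
    haepos.mono fun ω h => mul_nonneg h.1.le h.2.le
  -- basic exponential integral over (0,∞)
  have t0 : ∀ {k : ℝ}, 0 < k → ∫ x in Set.Ioi (0:ℝ), Real.exp (-(k*x)) = 1/k := by
    intro k hk
    rw [tail0 hk 0]
    norm_num
  -- marginal expectations
  have hlint1 : ∫⁻ ω, ENNReal.ofReal (τ₁ ω) ∂P = ENNReal.ofReal (1/A) := by
    rw [lintegral_eq_lintegral_meas_lt P hτ₁nn mτ₁.aemeasurable,
      setLIntegral_congr_fun measurableSet_Ioi
        (fun s hs => hsurv1 s (le_of_lt hs)),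
      ← ofReal_integral_eq_lintegral_ofReal (tail0_int hApos 0)
        (ae_of_all _ (fun s => (Real.exp_pos _).le)), t0 hApos]
  have hlint2 : ∫⁻ ω, ENNReal.ofReal (τ₂ ω) ∂P = ENNReal.ofReal (1/B) := by
    rw [lintegral_eq_lintegral_meas_lt P hτ₂nn mτ₂.aemeasurable,
      setLIntegral_congr_fun measurableSet_Ioi
        (fun t ht => hsurv2 t (le_of_lt ht)),
      ← ofReal_integral_eq_lintegral_ofReal (tail0_int hBpos 0)
        (ae_of_all _ (fun t => (Real.exp_pos _).le)), t0 hBpos]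
  have hEτ₁ : ∫ ω, τ₁ ω ∂P = 1/A := by
    rw [integral_eq_lintegral_of_nonneg_ae hτ₁nn mτ₁.aestronglyMeasurable, hlint1,
      ENNReal.toReal_ofReal (by positivity)]
  have hEτ₂ : ∫ ω, τ₂ ω ∂P = 1/B := by
    rw [integral_eq_lintegral_of_nonneg_ae hτ₂nn mτ₂.aestronglyMeasurable, hlint2,
      ENNReal.toReal_ofReal (by positivity)]
  -- two-dimensional layer cake
  set ν : Measure Ω := P.withDensity (fun ω => ENNReal.ofReal (τ₂ ω)) with hν_def
  have hdouble : ∫⁻ ω, ENNReal.ofReal (τ₁ ω * τ₂ ω) ∂P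
      = ∫⁻ s in Set.Ioi 0, ∫⁻ t in Set.Ioi 0, P {ω | s < τ₁ ω ∧ t < τ₂ ω} := by
    have step1 : ∫⁻ ω, ENNReal.ofReal (τ₁ ω * τ₂ ω) ∂P
        = ∫⁻ ω, (ENNReal.ofReal (τ₂ ω) * ENNReal.ofReal (τ₁ ω)) ∂P := by
      apply lintegral_congr_ae
      filter_upwards [hτ₁nn] with ω h
      rw [ENNReal.ofReal_mul h, mul_comm]
    have step2 : ∫⁻ ω, (ENNReal.ofReal (τ₂ ω) * ENNReal.ofReal (τ₁ ω)) ∂P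
        = ∫⁻ ω, ENNReal.ofReal (τ₁ ω) ∂ν := by
      have hf2 : Measurable (fun ω => ENNReal.ofReal (τ₂ ω)) :=
        ENNReal.measurable_ofReal.comp mτ₂
      have hf1 : Measurable (fun ω => ENNReal.ofReal (τ₁ ω)) :=
        ENNReal.measurable_ofReal.comp mτ₁
      rw [hν_def, lintegral_withDensity_eq_lintegral_mul P hf2 hf1]
      rfl
    have hν1nn : 0 ≤ᵐ[ν] τ₁ :=
      hτ₁nn.filter_mono (withDensity_absolutelyContinuous P _).ae_le
    have step3 : ∫⁻ ω, ENNReal.ofReal (τ₁ ω) ∂ν = ∫⁻ s in Set.Ioi 0, ν {ω | s < τ₁ ω} :=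
      lintegral_eq_lintegral_meas_lt ν hν1nn mτ₁.aemeasurable
    have step4 : ∀ s : ℝ, ν {ω | s < τ₁ ω}
        = ∫⁻ t in Set.Ioi 0, P {ω | s < τ₁ ω ∧ t < τ₂ ω} := by
      intro s
      have hms : MeasurableSet {ω | s < τ₁ ω} := measurableSet_lt measurable_const mτ₁
      rw [hν_def, withDensity_apply _ hms]
      have hrnn : 0 ≤ᵐ[P.restrict {ω | s < τ₁ ω}] τ₂ := ae_restrict_of_ae hτ₂nn
      rw [lintegral_eq_lintegral_meas_lt _ hrnn mτ₂.aemeasurable]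
      apply lintegral_congr
      intro t
      rw [Measure.restrict_apply (measurableSet_lt measurable_const mτ₂)]
      congr 1
      ext ω
      simp only [Set.mem_inter_iff, Set.mem_setOf_eq]
      tauto
    rw [step1, step2, step3]
    exact lintegral_congr (fun s => step4 s)
  -- the comparison function and its integral
  set Stil : ℝ → ℝ → ℝ := fun s t => Real.exp (-(A*s)) *
      (Real.exp (-((B + q*s)*t)) + EE * l₃ * (min s t * Real.exp (-(B*t)))) with hStil_def
  set Gout : ℝ → ℝ := fun s => (1/(2*B)) * (Real.exp (-(A*s)) + Real.exp (-(A2*s)))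
      + (EE*l₃/B^2) * (Real.exp (-(A*s)) - Real.exp (-(S*s))) with hGout_def
  set V : ℝ := (1/(2*B))*(1/A + 1/A2) + (EE*l₃/B^2)*(1/A - 1/S) with hV_def
  -- pointwise bound on the joint survival function
  have hpw : ∀ s t : ℝ, 0 < s → 0 < t →
      Real.exp (-(s*l₁) - t*l₂ - (s*l₁)*(t*l₂)) * Real.exp (-(max s t * l₃)) ≤ Stil s t := by
    intro s t hs ht
    have hminnn : 0 ≤ min s t := le_min hs.le ht.le
    have hmm : min s t * min s t ≤ s * t :=
      mul_le_mul (min_le_left s t) (min_le_right s t) hminnn hs.le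
    have hkey : l₃ * min s t - q*(s*t) ≤ M := by
      rw [hM_def, le_div_iff₀ (by linarith : (0:ℝ) < 4*q)]
      nlinarith [sq_nonneg (l₃ - 2*q*min s t), mul_le_mul_of_nonneg_left hmm
        (le_of_lt (mul_pos hqpos hqpos))]
    have hY : Real.exp (-((B+q*s)*t)) = Real.exp (-(B*t)) * Real.exp (-(q*(s*t))) := by
      rw [← Real.exp_add]; congr 1; ring
    have e1 : Real.exp (l₃ * min s t) - 1 ≤ (l₃ * min s t) * Real.exp (l₃ * min s t) :=
      exp_sub_one_le' (mul_nonneg hl₃.le hminnn)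
    have e4 : Real.exp (-(q*(s*t))) * Real.exp (l₃ * min s t) ≤ EE := by
      rw [← Real.exp_add, hEE_def]
      apply Real.exp_le_exp.2
      linarith [hkey]
    have hLHS : Real.exp (-(s*l₁) - t*l₂ - (s*l₁)*(t*l₂)) * Real.exp (-(max s t * l₃))
        = (Real.exp (-(A*s)) * Real.exp (-((B+q*s)*t))) * Real.exp (l₃ * min s t) := by
      rw [← Real.exp_add, ← Real.exp_add, ← Real.exp_add]
      congr 1
      have hmax : min s t + max s t = s + t := min_add_max s t
      rw [hA_def, hB_def, hq_def]
      linear_combination (-l₃ : ℝ) * hmax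
    have h6 : Real.exp (-((B+q*s)*t)) * Real.exp (l₃ * min s t)
        ≤ Real.exp (-((B+q*s)*t)) + EE * l₃ * (min s t * Real.exp (-(B*t))) := by
      have h7 := mul_le_mul_of_nonneg_left e1 (Real.exp_pos (-((B+q*s)*t))).le
      have h8 : Real.exp (-((B+q*s)*t)) * ((l₃ * min s t) * Real.exp (l₃ * min s t))
          = (l₃ * min s t) * (Real.exp (-(B*t)) *
            (Real.exp (-(q*(s*t))) * Real.exp (l₃ * min s t))) := by
        rw [hY]; ring
      have h9 : (l₃ * min s t) * (Real.exp (-(B*t)) *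
            (Real.exp (-(q*(s*t))) * Real.exp (l₃ * min s t)))
          ≤ (l₃ * min s t) * (Real.exp (-(B*t)) * EE) := by
        apply mul_le_mul_of_nonneg_left
          (mul_le_mul_of_nonneg_left e4 (Real.exp_pos (-(B*t))).le)
          (mul_nonneg hl₃.le hminnn)
      linarith [h7, h8, h9]
    calc Real.exp (-(s*l₁) - t*l₂ - (s*l₁)*(t*l₂)) * Real.exp (-(max s t * l₃))
        = Real.exp (-(A*s)) * (Real.exp (-((B+q*s)*t)) * Real.exp (l₃ * min s t)) := by
          rw [hLHS]; ring
      _ ≤ Real.exp (-(A*s)) * (Real.exp (-((B+q*s)*t))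
            + EE * l₃ * (min s t * Real.exp (-(B*t)))) :=
          mul_le_mul_of_nonneg_left h6 (Real.exp_pos _).le
      _ = Stil s t := by rw [hStil_def]
  -- integrability and inner integral of Stil
  have hBq : ∀ s : ℝ, 0 < s → 0 < B + q*s := fun s hs => by positivity
  have hStil_int : ∀ s : ℝ, 0 < s → IntegrableOn (fun t => Stil s t) (Set.Ioi 0) := by
    intro s hs
    simp only [hStil_def]
    exact ((tail0_int (hBq s hs) 0).add ((Mmin_int hBpos hs).const_mul (EE*l₃))).const_mul _
  have hStil_nn : ∀ s t : ℝ, 0 < s → 0 ≤ t → 0 ≤ Stil s t := by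
    intro s t hs ht
    have hmin : 0 ≤ min s t := le_min hs.le ht
    rw [hStil_def]
    apply mul_nonneg (Real.exp_pos _).le
    apply add_nonneg (Real.exp_pos _).le
    exact mul_nonneg (mul_nonneg hEEpos.le hl₃.le) (mul_nonneg hmin (Real.exp_pos _).le)
  have hgtil : ∀ s : ℝ, 0 < s → ∫ t in Set.Ioi 0, Stil s t
      = Real.exp (-(A*s)) * (1/(B + q*s) + EE * l₃ * ((1 - Real.exp (-(B*s)))/B^2)) := by
    intro s hs
    simp only [hStil_def]
    rw [integral_const_mul,
      integral_add (tail0_int (hBq s hs) 0) ((Mmin_int hBpos hs).const_mul (EE*l₃)),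
      integral_const_mul, Mmin hBpos hs, t0 (hBq s hs)]
  -- outer pointwise bound
  have hgG : ∀ s : ℝ, 0 < s →
      Real.exp (-(A*s)) * (1/(B + q*s) + EE * l₃ * ((1 - Real.exp (-(B*s)))/B^2))
        ≤ Gout s := by
    intro s hs
    have hu : 0 ≤ q*s/B := le_of_lt (div_pos (mul_pos hqpos hs) hBpos)
    have h1 := key_inv hu
    have h2 : 1/(B + q*s) = (1/B) * (1 + q*s/B)⁻¹ := by
      rw [one_div, one_div, ← mul_inv]
      congr 1
      field_simp
    have h3 : Real.exp (-(A*s)) * Real.exp (-(2*(q*s/B))) = Real.exp (-(A2*s)) := by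
      rw [← Real.exp_add]
      congr 1
      rw [hA2_def]
      field_simp
      ring
    have h4 : Real.exp (-(A*s)) * Real.exp (-(B*s)) = Real.exp (-(S*s)) := by
      rw [← Real.exp_add]
      congr 1
      rw [hS_def]
      ring
    have hterm1 : Real.exp (-(A*s)) * (1/(B + q*s))
        ≤ (1/(2*B)) * (Real.exp (-(A*s)) + Real.exp (-(A2*s))) := by
      rw [h2]
      have hc0 : 0 ≤ Real.exp (-(A*s)) * (1/B) :=
        mul_nonneg (Real.exp_pos _).le (le_of_lt (by positivity))
      calc Real.exp (-(A*s)) * ((1/B) * (1 + q*s/B)⁻¹)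
          = (Real.exp (-(A*s)) * (1/B)) * (1 + q*s/B)⁻¹ := by ring
        _ ≤ (Real.exp (-(A*s)) * (1/B)) * ((1 + Real.exp (-(2*(q*s/B))))/2) :=
            mul_le_mul_of_nonneg_left h1 hc0
        _ = (1/(2*B)) * (Real.exp (-(A*s))
              + Real.exp (-(A*s)) * Real.exp (-(2*(q*s/B)))) := by
            rw [(by rw [one_div, mul_inv, one_div] : (1:ℝ)/(2*B) = (1/2) * B⁻¹)]
            ring
        _ = (1/(2*B)) * (Real.exp (-(A*s)) + Real.exp (-(A2*s))) := by rw [h3]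
    have hterm2 : Real.exp (-(A*s)) * (EE * l₃ * ((1 - Real.exp (-(B*s)))/B^2))
        = (EE*l₃/B^2) * (Real.exp (-(A*s)) - Real.exp (-(S*s))) := by
      rw [← h4]; ring
    have hGG : Gout s = (1/(2*B)) * (Real.exp (-(A*s)) + Real.exp (-(A2*s)))
        + (EE*l₃/B^2) * (Real.exp (-(A*s)) - Real.exp (-(S*s))) := by rw [hGout_def]
    rw [hGG, mul_add, hterm2]
    exact add_le_add_left hterm1 _
  -- integral of Gout
  have hGout_int : IntegrableOn Gout (Set.Ioi 0) := by
    simp only [hGout_def]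
    exact (((tail0_int hApos 0).add (tail0_int hA2pos 0)).const_mul _).add
      (((tail0_int hApos 0).sub (tail0_int hSpos 0)).const_mul _)
  have hGout_nn : ∀ s : ℝ, 0 < s → 0 ≤ Gout s := by
    intro s hs
    have h4 : Real.exp (-(S*s)) ≤ Real.exp (-(A*s)) := by
      apply Real.exp_le_exp.2
      have : A*s ≤ S*s := by
        apply mul_le_mul_of_nonneg_right _ hs.le
        rw [hS_def]; linarith
      linarith
    rw [hGout_def]
    apply add_nonneg
    · apply mul_nonneg (le_of_lt (by positivity))
      exact add_nonneg (Real.exp_pos _).le (Real.exp_pos _).le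
    · apply mul_nonneg
      · apply div_nonneg (mul_nonneg hEEpos.le hl₃.le) (by positivity)
      · linarith
  have hVval : ∫ s in Set.Ioi 0, Gout s = V := by
    have i1 : IntegrableOn
        (fun s => (1/(2*B)) * (Real.exp (-(A*s)) + Real.exp (-(A2*s)))) (Set.Ioi 0) :=
      ((tail0_int hApos 0).add (tail0_int hA2pos 0)).const_mul _
    have i2 : IntegrableOn
        (fun s => (EE*l₃/B^2) * (Real.exp (-(A*s)) - Real.exp (-(S*s)))) (Set.Ioi 0) :=
      ((tail0_int hApos 0).sub (tail0_int hSpos 0)).const_mul _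
    have i3 : IntegrableOn (fun s => Real.exp (-(A*s)) + Real.exp (-(A2*s))) (Set.Ioi 0) :=
      (tail0_int hApos 0).add (tail0_int hA2pos 0)
    have i4 : IntegrableOn (fun s => Real.exp (-(A*s)) - Real.exp (-(S*s))) (Set.Ioi 0) :=
      (tail0_int hApos 0).sub (tail0_int hSpos 0)
    simp only [hGout_def]
    rw [integral_add i1 i2, integral_const_mul, integral_const_mul,
      integral_add (tail0_int hApos 0) (tail0_int hA2pos 0),
      integral_sub (tail0_int hApos 0) (tail0_int hSpos 0),
      t0 hApos, t0 hA2pos, t0 hSpos, hV_def]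
  -- master bound for the product expectation
  have hbound : ∫⁻ ω, ENNReal.ofReal (τ₁ ω * τ₂ ω) ∂P ≤ ENNReal.ofReal V := by
    rw [hdouble]
    have hinner : ∀ s : ℝ, s ∈ Set.Ioi (0:ℝ) →
        (∫⁻ t in Set.Ioi 0, P {ω | s < τ₁ ω ∧ t < τ₂ ω}) ≤ ENNReal.ofReal (Gout s) := by
      intro s hs
      rw [Set.mem_Ioi] at hs
      rw [setLIntegral_congr_fun measurableSet_Ioi
        (fun t ht => hsurv s t hs.le (le_of_lt ht))]
      have e2 : (∫⁻ t in Set.Ioi 0, ENNReal.ofReal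
            (Real.exp (-(s*l₁) - t*l₂ - (s*l₁)*(t*l₂)) * Real.exp (-(max s t * l₃))))
          ≤ ∫⁻ t in Set.Ioi 0, ENNReal.ofReal (Stil s t) := by
        apply lintegral_mono_ae
        rw [ae_restrict_iff' measurableSet_Ioi]
        exact ae_of_all _ (fun t ht => ENNReal.ofReal_le_ofReal (hpw s t hs ht))
      refine le_trans e2 ?_
      rw [← ofReal_integral_eq_lintegral_ofReal (hStil_int s hs)
        ((ae_restrict_iff' measurableSet_Ioi).2
          (ae_of_all _ (fun t ht => hStil_nn s t hs (le_of_lt ht))))]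
      exact ENNReal.ofReal_le_ofReal (le_trans (le_of_eq (hgtil s hs)) (hgG s hs))
    calc ∫⁻ s in Set.Ioi 0, (∫⁻ t in Set.Ioi 0, P {ω | s < τ₁ ω ∧ t < τ₂ ω})
        ≤ ∫⁻ s in Set.Ioi 0, ENNReal.ofReal (Gout s) := by
          apply lintegral_mono_ae
          rw [ae_restrict_iff' measurableSet_Ioi]
          exact ae_of_all _ hinner
      _ = ENNReal.ofReal V := by
          rw [← ofReal_integral_eq_lintegral_ofReal hGout_int
            ((ae_restrict_iff' measurableSet_Ioi).2
              (ae_of_all _ (fun s hs => hGout_nn s hs))), hVval]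
  have hInt12 : ∫ ω, τ₁ ω * τ₂ ω ∂P ≤ max V 0 := by
    rw [integral_eq_lintegral_of_nonneg_ae hprod_nn (mτ₁.mul mτ₂).aestronglyMeasurable]
    calc (∫⁻ ω, ENNReal.ofReal (τ₁ ω * τ₂ ω) ∂P).toReal
        ≤ (ENNReal.ofReal V).toReal :=
          ENNReal.toReal_mono ENNReal.ofReal_ne_top hbound
      _ = max V 0 := ENNReal.toReal_ofReal'
  -- final arithmetic
  have hM1 : M < 1 := by
    rw [hM_def, div_lt_one (by linarith : (0:ℝ) < 4*q)]
    rw [hq_def]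
    nlinarith [hcons, mul_pos hl₁pos hl₃, mul_pos hl₂pos hl₃, mul_pos hl₃ hl₃]
  have hABq : 0 < A*B + 2*q := by nlinarith [mul_pos hApos hBpos]
  have hkeyE : EE * (l₃*(A*B + 2*q)) < q * S := by
    have hpoly : l₃*(A*B + 2*q) + S*l₃^2/4 < q*S := by
      rw [hS_def, hA_def, hB_def, hq_def]
      nlinarith [sq_nonneg (l₁-l₂), sq_nonneg (l₁+l₂), mul_pos hl₁pos hl₂pos,
        mul_pos (mul_pos hl₁pos hl₂pos) hl₃, sq_nonneg (l₁+l₂-2*l₃), mul_pos hl₃ hl₃,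
        sq_nonneg l₃, mul_le_mul_of_nonneg_left hcons hl₃.le,
        mul_le_mul_of_nonneg_left hcons hl₁pos.le, mul_le_mul_of_nonneg_left hcons hl₂pos.le]
    have hE2 : EE * (1 - M) ≤ 1 := by rw [hEE_def]; exact exp_mul_one_sub_le' M
    have h1M : 0 < 1 - M := by linarith
    have hqSM : q*S*M = S*l₃^2/4 := by
      rw [hM_def]
      field_simp
    have hqS : l₃*(A*B+2*q) < q*S*(1-M) := by nlinarith [hpoly, hqSM]
    have step : EE * (l₃*(A*B+2*q)) * (1-M) ≤ l₃*(A*B+2*q) := by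
      have h0 : 0 ≤ l₃*(A*B+2*q) := le_of_lt (mul_pos hl₃ hABq)
      nlinarith [mul_le_mul_of_nonneg_left hE2 h0]
    have step2 : EE * (l₃*(A*B+2*q)) * (1-M) < q*S*(1-M) := lt_of_le_of_lt step hqS
    exact lt_of_mul_lt_mul_right step2 h1M.le
  have hVexp : V = 1/(2*(A*B)) + 1/(2*(A*B+2*q)) + (EE*l₃)/(A*B*S) := by
    rw [hV_def, hA2_def]
    have hSA : S - A = B := by rw [hS_def]; ring
    field_simp
    ring_nf
    rw [hS_def]
    ring
  have hVlt : V < 1/(A*B) := by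
    rw [hVexp]
    have htarget : (EE*l₃)/(A*B*S) < q/((A*B)*(A*B+2*q)) := by
      rw [div_lt_div_iff₀ (by positivity) (by positivity)]
      have hAB : 0 < A*B := mul_pos hApos hBpos
      nlinarith [mul_lt_mul_of_pos_left hkeyE hAB]
    have hid : 1/(2*(A*B)) + 1/(2*(A*B+2*q)) + q/((A*B)*(A*B+2*q)) = 1/(A*B) := by
      have h1 : A*B ≠ 0 := by positivity
      have h2 : A*B + 2*q ≠ 0 := by positivity
      field_simp
      ring
    linarith
  have hprod_val : (∫ ω, τ₁ ω ∂P) * (∫ ω, τ₂ ω ∂P) = 1/(A*B) := by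
    rw [hEτ₁, hEτ₂, div_mul_div_comm, one_mul]
  have h0lt : (0:ℝ) < 1/(A*B) := by positivity
  have hfin : ∫ ω, τ₁ ω * τ₂ ω ∂P < 1/(A*B) :=
    lt_of_le_of_lt hInt12 (max_lt hVlt h0lt)
  rw [hprod_val]
  linarith
end

section
/- (Appendix inequality: a bound on the Gaussian tail integral) For every real number x ≥ 1, ∫_x^∞ exp(−u²) du ≤ (8x/(16x² + 5)) · exp(−x²). -/
open MeasureTheory

theorem stmt19 (x : ℝ) (hx : 1 ≤ x) :
    (∫ u in Set.Ioi x, Real.exp (-u ^ 2))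
      ≤ (8 * x / (16 * x ^ 2 + 5)) * Real.exp (-x ^ 2) := by
  have hx0 : (0:ℝ) < x := lt_of_lt_of_le one_pos hx
  -- comparison function g u = -(r u * exp (-u^2)) with r u = (63u²+17)/(126u³+84u)
  set g : ℝ → ℝ := fun u => -((63*u^2+17)/(126*u^3+84*u) * Real.exp (-u^2)) with hgdef
  set g' : ℝ → ℝ := fun u =>
    ((2*u*(63*u^2+17)*(126*u^3+84*u)
      - (126*u*(126*u^3+84*u) - (63*u^2+17)*(378*u^2+84)))/(126*u^3+84*u)^2)
      * Real.exp (-u^2) with hg'def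
  have hP : ∀ u : ℝ, x ≤ u → (0:ℝ) < 126*u^3+84*u := by
    intro u hu
    have h1 : (1:ℝ) ≤ u := le_trans hx hu
    nlinarith [pow_pos (show (0:ℝ) < u by linarith) 3]
  have hderiv : ∀ u : ℝ, x ≤ u → HasDerivAt g (g' u) u := by
    intro u hu
    have hPu : (126*u^3+84*u) ≠ 0 := ne_of_gt (hP u hu)
    have hN : HasDerivAt (fun v : ℝ => 63*v^2+17) (126*u) u := by
      have h := ((hasDerivAt_pow 2 u).const_mul (63:ℝ)).add_const (17:ℝ)
      simpa using h.congr_deriv (by ring)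
    have hD : HasDerivAt (fun v : ℝ => 126*v^3+84*v) (378*u^2+84) u := by
      have h := (((hasDerivAt_pow 3 u).const_mul (126:ℝ)).add
        ((hasDerivAt_id u).const_mul (84:ℝ)))
      exact h.congr_deriv (by norm_num <;> ring)
    have hr : HasDerivAt (fun v : ℝ => (63*v^2+17)/(126*v^3+84*v))
        ((126*u*(126*u^3+84*u) - (63*u^2+17)*(378*u^2+84))/(126*u^3+84*u)^2) u :=
      hN.div hD hPu
    have hexp : HasDerivAt (fun v : ℝ => Real.exp (-v^2))
        (Real.exp (-u^2) * (-(2*u))) u := by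
      have h := ((hasDerivAt_pow 2 u).neg).exp
      simp only [Pi.neg_apply] at h
      exact h.congr_deriv (by norm_num <;> ring)
    have h := (hr.mul hexp).neg
    have hval : -(((126*u*(126*u^3+84*u) - (63*u^2+17)*(378*u^2+84))/(126*u^3+84*u)^2)
        * Real.exp (-u^2) + (63*u^2+17)/(126*u^3+84*u) * (Real.exp (-u^2) * (-(2*u))))
        = g' u := by
      rw [hg'def]
      field_simp
      ring
    rw [← hval]
    exact h
  have hbound : ∀ u : ℝ, u ∈ Set.Ioi x → Real.exp (-u^2) ≤ g' u := by
    intro u hu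
    have h1 : (1:ℝ) ≤ u := le_trans hx (le_of_lt hu)
    have hPu : (0:ℝ) < 126*u^3+84*u := hP u (le_of_lt hu)
    rw [hg'def]
    have hkey : (1:ℝ) ≤ (2*u*(63*u^2+17)*(126*u^3+84*u)
        - (126*u*(126*u^3+84*u) - (63*u^2+17)*(378*u^2+84)))/(126*u^3+84*u)^2 := by
      rw [le_div_iff₀ (by positivity)]
      nlinarith [sq_nonneg u, sq_nonneg (u^2-1), mul_pos hPu hPu]
    calc Real.exp (-u^2) = 1 * Real.exp (-u^2) := (one_mul _).symm
      _ ≤ _ := mul_le_mul_of_nonneg_right hkey (Real.exp_nonneg _)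
  have hg'nonneg : ∀ u : ℝ, u ∈ Set.Ioi x → 0 ≤ g' u := fun u hu =>
    le_trans (Real.exp_nonneg _) (hbound u hu)
  have htend : Filter.Tendsto g Filter.atTop (nhds 0) := by
    rw [hgdef]
    have h0 : Filter.Tendsto (fun u : ℝ =>
        (63*u^2+17)/(126*u^3+84*u) * Real.exp (-u^2)) Filter.atTop (nhds 0) := by
      apply tendsto_of_tendsto_of_tendsto_of_le_of_le'
        (tendsto_const_nhds : Filter.Tendsto (fun _ : ℝ => (0:ℝ)) Filter.atTop (nhds 0))
        (Real.tendsto_exp_neg_atTop_nhds_zero)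
      · filter_upwards [Filter.eventually_ge_atTop (1:ℝ)] with u hu
        have hPu : (0:ℝ) < 126*u^3+84*u := by
          nlinarith [pow_pos (show (0:ℝ) < u by linarith) 3]
        positivity
      · filter_upwards [Filter.eventually_ge_atTop (1:ℝ)] with u hu
        have hPu : (0:ℝ) < 126*u^3+84*u := by
          nlinarith [pow_pos (show (0:ℝ) < u by linarith) 3]
        have hr1 : (63*u^2+17)/(126*u^3+84*u) ≤ 1 := by
          rw [div_le_one hPu]; nlinarith
        have hee : Real.exp (-u^2) ≤ Real.exp (-u) := by
          apply Real.exp_le_exp.2; nlinarith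
        calc (63*u^2+17)/(126*u^3+84*u) * Real.exp (-u^2)
            ≤ 1 * Real.exp (-u) := by
              apply mul_le_mul hr1 hee (Real.exp_nonneg _) one_pos.le
          _ = Real.exp (-u) := one_mul _
    have := h0.neg
    simpa using this
  have hcont : ContinuousWithinAt g (Set.Ici x) x :=
    (hderiv x le_rfl).continuousAt.continuousWithinAt
  have hint : ∫ u in Set.Ioi x, g' u = 0 - g x :=
    integral_Ioi_of_hasDerivAt_of_nonneg hcont
      (fun u hu => hderiv u (le_of_lt hu)) hg'nonneg htend
  have hIntExp : IntegrableOn (fun u : ℝ => Real.exp (-u^2)) (Set.Ioi x) := by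
    have h : Integrable (fun u : ℝ => Real.exp (-(1:ℝ)*u^2)) :=
      integrable_exp_neg_mul_sq one_pos
    have h2 : Integrable (fun u : ℝ => Real.exp (-u^2)) := by
      simpa using h
    exact h2.integrableOn
  have hIntg' : IntegrableOn g' (Set.Ioi x) :=
    integrableOn_Ioi_deriv_of_nonneg hcont
      (fun u hu => hderiv u (le_of_lt hu)) hg'nonneg htend
  have hmono : (∫ u in Set.Ioi x, Real.exp (-u^2)) ≤ ∫ u in Set.Ioi x, g' u :=
    setIntegral_mono_on hIntExp hIntg' measurableSet_Ioi hbound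
  have hfinal : (0:ℝ) - g x = (63*x^2+17)/(126*x^3+84*x) * Real.exp (-x^2) := by
    rw [hgdef]; ring
  have hrle : (63*x^2+17)/(126*x^3+84*x) ≤ 8*x/(16*x^2+5) := by
    rw [div_le_div_iff₀ (hP x le_rfl) (by positivity)]
    nlinarith
  calc (∫ u in Set.Ioi x, Real.exp (-u^2))
      ≤ ∫ u in Set.Ioi x, g' u := hmono
    _ = (63*x^2+17)/(126*x^3+84*x) * Real.exp (-x^2) := by rw [hint, hfinal]
    _ ≤ 8*x/(16*x^2+5) * Real.exp (-x^2) :=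
        mul_le_mul_of_nonneg_right hrle (Real.exp_nonneg _)
    _ = (8 * x / (16 * x ^ 2 + 5)) * Real.exp (-x ^ 2) := by norm_num
end
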